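/- Let \(P\) satisfy the Doeblin condition with constant \(\alpha \in (0,1)\), and let \(\hat P_1, \dots, \hat P_M\) be Markov kernels each satisfying \(\sup_\theta \|\hat P_t(\theta,\cdot) - P(\theta,\cdot)\|_{TV} \le \epsilon\). Let \(\mu\) be an invariant probability measure of \(P\) and \(\nu\) any probability measure. Then \(\|\nu \hat P_1 \cdots \hat P_M - \mu\|_{TV} \le (1-\alpha)^M \|\mu - \nu\|_{TV} + \epsilon \frac{1 - (1-\alpha)^M}{\alpha}\). -/

import Mathlib

/-!
Let `dₙ` be the total variation distance from `ν P̂₁ ⋯ P̂ₙ` to `μ`. Passing through `ρ P`, where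
`ρ = ν P̂₁ ⋯ P̂ₙ`, and using `μ P = μ` gives `dₙ₊₁ ≤ ε + (1 - α) dₙ`: replacing `P̂ₙ₊₁` by `P` costs
at most `ε`, and `P` contracts total variation by `1 - α`. The contraction holds because, with a Hahn
decomposition of `ρ` against `μ`, `|∫ f dρ - ∫ f dμ|` is at most the oscillation of `f` times the
total variation distance, and the Doeblin condition bounds the oscillation of `θ ↦ P(θ, A)` by
`1 - α`. Unrolling the recursion gives the geometric sum.
-/

open MeasureTheory

noncomputable def tvDist {Θ : Type*} [MeasurableSpace Θ] (μ ν : Measure Θ) : ℝ :=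
  sSup {r : ℝ | ∃ A : Set Θ, MeasurableSet A ∧ r = |(μ A).toReal - (ν A).toReal|}

/-- `iterBind ν Ps M` is the distribution `ν P̂₁ ⋯ P̂_M` obtained by applying the
kernels `Ps 1, …, Ps M` successively starting from `ν`. -/
noncomputable def iterBind {Θ : Type*} [MeasurableSpace Θ]
    (ν : Measure Θ) (Ps : ℕ → Θ → Measure Θ) : ℕ → Measure Θ
  | 0 => ν
  | n + 1 => (iterBind ν Ps n).bind (Ps (n + 1))

lemma le_pow_mul_add_of_le_add_mul {d : ℕ → ℝ} {q ε : ℝ} (hq : 0 ≤ q) (hq1 : q ≠ 1)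
    (hd : ∀ n, d (n + 1) ≤ ε + q * d n) (n : ℕ) :
    d n ≤ q ^ n * d 0 + ε * (1 - q ^ n) / (1 - q) := by
  induction n with
  | zero => simp
  | succ n ih =>
    have : 1 - q ≠ 0 := sub_ne_zero.2 hq1.symm
    calc d (n + 1) ≤ ε + q * d n := hd n
      _ ≤ ε + q * (q ^ n * d 0 + ε * (1 - q ^ n) / (1 - q)) := by gcongr
      _ = q ^ (n + 1) * d 0 + ε * (1 - q ^ (n + 1)) / (1 - q) := by field_simp; ring

namespace MeasureTheory

variable {Θ : Type*} [MeasurableSpace Θ]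

section TotalVariation

lemma tvDist_comm (μ ν : Measure Θ) : tvDist μ ν = tvDist ν μ := by
  simp only [tvDist, abs_sub_comm]

lemma tvDist_le {μ ν : Measure Θ} {c : ℝ}
    (h : ∀ A, MeasurableSet A → |μ.real A - ν.real A| ≤ c) : tvDist μ ν ≤ c :=
  csSup_le ⟨_, ∅, .empty, rfl⟩ (by rintro r ⟨A, hA, rfl⟩; exact h A hA)

variable (μ ν : Measure Θ) [IsProbabilityMeasure μ] [IsProbabilityMeasure ν]

lemma abs_measureReal_sub_le_tvDist {A : Set Θ} (hA : MeasurableSet A) :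
    |μ.real A - ν.real A| ≤ tvDist μ ν := by
  refine le_csSup ⟨1, ?_⟩ ⟨A, hA, rfl⟩
  rintro r ⟨B, -, rfl⟩
  exact abs_sub_le_of_nonneg_of_le measureReal_nonneg measureReal_le_one
    measureReal_nonneg measureReal_le_one

lemma tvDist_triangle (ρ : Measure Θ) [IsProbabilityMeasure ρ] :
    tvDist μ ρ ≤ tvDist μ ν + tvDist ν ρ :=
  tvDist_le fun A hA => (abs_sub_le _ (ν.real A) _).trans <|
    add_le_add (abs_measureReal_sub_le_tvDist μ ν hA) (abs_measureReal_sub_le_tvDist ν ρ hA)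

end TotalVariation

section Integral

lemma integrable_of_mem_Icc {μ : Measure Θ} [IsFiniteMeasure μ] {f : Θ → ℝ} (hf : Measurable f)
    {a b : ℝ} (hfab : ∀ θ, f θ ∈ Set.Icc a b) : Integrable f μ :=
  .of_bound hf.aestronglyMeasurable (max |a| |b|) <| ae_of_all _ fun θ =>
    abs_le_max_abs_abs (hfab θ).1 (hfab θ).2

lemma integral_sub_integral_mem_Icc_of_le {μ ν : Measure Θ} [IsFiniteMeasure μ] (hνμ : ν ≤ μ)
    {f : Θ → ℝ} (hf : Measurable f) {a b : ℝ} (hfab : ∀ θ, f θ ∈ Set.Icc a b) :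
    ∫ θ, f θ ∂μ - ∫ θ, f θ ∂ν ∈
      Set.Icc (a * (μ.real .univ - ν.real .univ)) (b * (μ.real .univ - ν.real .univ)) := by
  have : IsFiniteMeasure ν := isFiniteMeasure_of_le μ hνμ
  have hfμ : Integrable f μ := integrable_of_mem_Icc hf hfab
  have hfν : Integrable f ν := integrable_of_mem_Icc hf hfab
  have hlow := integral_mono_measure hνμ (ae_of_all _ fun θ => sub_nonneg.2 (hfab θ).1)
    (hfμ.sub (integrable_const a))
  have hup := integral_mono_measure hνμ (ae_of_all _ fun θ => sub_nonneg.2 (hfab θ).2)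
    ((integrable_const b).sub hfμ)
  rw [integral_sub hfν (integrable_const a), integral_sub hfμ (integrable_const a),
    integral_const, integral_const, smul_eq_mul, smul_eq_mul] at hlow
  rw [integral_sub (integrable_const b) hfν, integral_sub (integrable_const b) hfμ,
    integral_const, integral_const, smul_eq_mul, smul_eq_mul] at hup
  constructor <;> linarith

lemma restrict_le_restrict_of_forall_le {μ ν : Measure Θ} {s : Set Θ} (hs : MeasurableSet s)
    (h : ∀ t, MeasurableSet t → t ⊆ s → ν t ≤ μ t) : ν.restrict s ≤ μ.restrict s :=
  Measure.le_iff.2 fun t ht => by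
    simpa only [Measure.restrict_apply ht] using h _ (ht.inter hs) Set.inter_subset_right

lemma integral_sub_integral_le_mul_tvDist (μ ν : Measure Θ) [IsProbabilityMeasure μ]
    [IsProbabilityMeasure ν] {f : Θ → ℝ} (hf : Measurable f) {a b : ℝ}
    (hfab : ∀ θ, f θ ∈ Set.Icc a b) :
    ∫ θ, f θ ∂μ - ∫ θ, f θ ∂ν ≤ (b - a) * tvDist μ ν := by
  obtain ⟨s, hs, hνμ, hμν⟩ := hahn_decomposition μ ν
  have hsplit (ρ : Measure Θ) [IsFiniteMeasure ρ] :
      ∫ θ, f θ ∂ρ = ∫ θ in s, f θ ∂ρ + ∫ θ in sᶜ, f θ ∂ρ :=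
    (integral_add_compl hs (integrable_of_mem_Icc hf hfab)).symm
  have hs_pos := (integral_sub_integral_mem_Icc_of_le
    (restrict_le_restrict_of_forall_le hs hνμ) hf hfab).2
  have hs_neg := (integral_sub_integral_mem_Icc_of_le
    (restrict_le_restrict_of_forall_le hs.compl hμν) hf hfab).1
  simp only [measureReal_restrict_apply_univ, probReal_compl_eq_one_sub hs] at hs_pos hs_neg
  have hab : a ≤ b := by
    obtain ⟨θ⟩ := nonempty_of_isProbabilityMeasure μ
    exact (hfab θ).1.trans (hfab θ).2
  have htv : μ.real s - ν.real s ≤ tvDist μ ν :=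
    (le_abs_self _).trans (abs_measureReal_sub_le_tvDist μ ν hs)
  rw [hsplit μ, hsplit ν]
  linarith [mul_le_mul_of_nonneg_left htv (sub_nonneg.2 hab)]

lemma abs_integral_sub_integral_le_mul_tvDist (μ ν : Measure Θ) [IsProbabilityMeasure μ]
    [IsProbabilityMeasure ν] {f : Θ → ℝ} (hf : Measurable f) {a b : ℝ}
    (hfab : ∀ θ, f θ ∈ Set.Icc a b) :
    |∫ θ, f θ ∂μ - ∫ θ, f θ ∂ν| ≤ (b - a) * tvDist μ ν :=
  abs_sub_le_iff.2 ⟨integral_sub_integral_le_mul_tvDist μ ν hf hfab,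
    tvDist_comm μ ν ▸ integral_sub_integral_le_mul_tvDist ν μ hf hfab⟩

end Integral

section Kernel

variable {P Q : Θ → Measure Θ}

lemma measurable_measureReal_apply (hP : Measurable P) {A : Set Θ} (hA : MeasurableSet A) :
    Measurable fun θ => (P θ).real A :=
  ENNReal.measurable_toReal.comp ((Measure.measurable_coe hA).comp hP)

lemma measureReal_bind (hP : Measurable P) [∀ θ, IsFiniteMeasure (P θ)] (ρ : Measure Θ)
    {A : Set Θ} (hA : MeasurableSet A) : (ρ.bind P).real A = ∫ θ, (P θ).real A ∂ρ := by
  rw [measureReal_def, Measure.bind_apply hA hP.aemeasurable]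
  exact (integral_toReal ((Measure.measurable_coe hA).comp hP).aemeasurable
    (ae_of_all _ fun θ => measure_lt_top _ _)).symm

variable [∀ θ, IsProbabilityMeasure (P θ)]

lemma measureReal_apply_mem_Icc (θ : Θ) (A : Set Θ) : (P θ).real A ∈ Set.Icc 0 1 :=
  ⟨measureReal_nonneg, measureReal_le_one⟩

lemma tvDist_bind_le_mul (hP : Measurable P) {c : ℝ} (hc : ∀ θ ζ, tvDist (P θ) (P ζ) ≤ c)
    (μ ν : Measure Θ) [IsProbabilityMeasure μ] [IsProbabilityMeasure ν] :
    tvDist (μ.bind P) (ν.bind P) ≤ c * tvDist μ ν := by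
  have : Nonempty Θ := nonempty_of_isProbabilityMeasure μ
  refine tvDist_le fun A hA => ?_
  set f : Θ → ℝ := fun θ => (P θ).real A
  -- `f` takes values in an interval of length `c` starting at its infimum.
  have hbdd : BddBelow (Set.range f) := ⟨0, by rintro _ ⟨θ, rfl⟩; exact measureReal_nonneg⟩
  have hf : ∀ θ, f θ ∈ Set.Icc (⨅ ζ, f ζ) ((⨅ ζ, f ζ) + c) := fun θ =>
    ⟨ciInf_le hbdd θ, sub_le_iff_le_add'.1 <| sub_le_comm.1 <| le_ciInf fun ζ => sub_le_comm.1 <|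
      (le_abs_self _).trans ((abs_measureReal_sub_le_tvDist _ _ hA).trans (hc θ ζ))⟩
  rw [measureReal_bind hP μ hA, measureReal_bind hP ν hA]
  simpa using abs_integral_sub_integral_le_mul_tvDist μ ν
    (measurable_measureReal_apply hP hA) hf

variable [∀ θ, IsProbabilityMeasure (Q θ)]

lemma tvDist_bind_le_of_forall_tvDist_le (hP : Measurable P) (hQ : Measurable Q) {ε : ℝ}
    (hε : ∀ θ, tvDist (Q θ) (P θ) ≤ ε) (ρ : Measure Θ) [IsProbabilityMeasure ρ] :
    tvDist (ρ.bind Q) (ρ.bind P) ≤ ε := by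
  refine tvDist_le fun A hA => ?_
  have hint {R : Θ → Measure Θ} [∀ θ, IsProbabilityMeasure (R θ)] (hR : Measurable R) :
      Integrable (fun θ => (R θ).real A) ρ :=
    integrable_of_mem_Icc (measurable_measureReal_apply hR hA) (measureReal_apply_mem_Icc · A)
  rw [measureReal_bind hQ ρ hA, measureReal_bind hP ρ hA, ← integral_sub (hint hQ) (hint hP)]
  simpa using norm_integral_le_of_norm_le_const (μ := ρ) <| ae_of_all _ fun θ =>
    (Real.norm_eq_abs _).trans_le <| (abs_measureReal_sub_le_tvDist (Q θ) (P θ) hA).trans (hε θ)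

lemma tvDist_bind_le_add_mul (hP : Measurable P) (hQ : Measurable Q) {c ε : ℝ}
    (hc : ∀ θ ζ, tvDist (P θ) (P ζ) ≤ c) (hε : ∀ θ, tvDist (Q θ) (P θ) ≤ ε)
    (ρ μ : Measure Θ) [IsProbabilityMeasure ρ] [IsProbabilityMeasure μ] (hμ : μ.bind P = μ) :
    tvDist (ρ.bind Q) μ ≤ ε + c * tvDist ρ μ := by
  have : IsProbabilityMeasure (ρ.bind P) :=
    isProbabilityMeasure_bind hP.aemeasurable (ae_of_all _ inferInstance)
  have : IsProbabilityMeasure (ρ.bind Q) :=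
    isProbabilityMeasure_bind hQ.aemeasurable (ae_of_all _ inferInstance)
  calc tvDist (ρ.bind Q) μ ≤ tvDist (ρ.bind Q) (ρ.bind P) + tvDist (ρ.bind P) (μ.bind P) := by
        rw [hμ]; exact tvDist_triangle _ _ _
    _ ≤ ε + c * tvDist ρ μ :=
        add_le_add (tvDist_bind_le_of_forall_tvDist_le hP hQ hε ρ) (tvDist_bind_le_mul hP hc ρ μ)

lemma isProbabilityMeasure_iterBind (ν : Measure Θ) [IsProbabilityMeasure ν]
    {Ps : ℕ → Θ → Measure Θ} (hPs : ∀ t, Measurable (Ps t))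
    [∀ t θ, IsProbabilityMeasure (Ps t θ)] (n : ℕ) : IsProbabilityMeasure (iterBind ν Ps n) := by
  induction n with
  | zero => assumption
  | succ n _ => exact isProbabilityMeasure_bind (hPs _).aemeasurable (ae_of_all _ inferInstance)

end Kernel

end MeasureTheory

theorem stmt5 {Θ : Type*} [MeasurableSpace Θ]
    (P : Θ → Measure Θ) (hPmeas : Measurable P)
    (hP : ∀ θ, IsProbabilityMeasure (P θ))
    (α : ℝ) (hα0 : 0 < α) (hα1 : α < 1)
    (hDoeblin : ∀ θ ζ : Θ, tvDist (P θ) (P ζ) ≤ 1 - α)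
    (M : ℕ) (Phat : ℕ → Θ → Measure Θ) (hPhatmeas : ∀ t, Measurable (Phat t))
    (hPhat : ∀ t θ, IsProbabilityMeasure (Phat t θ))
    (ε : ℝ)
    (hclose : ∀ t θ, tvDist (Phat t θ) (P θ) ≤ ε)
    (μ ν : Measure Θ) [IsProbabilityMeasure μ] [IsProbabilityMeasure ν]
    (hinv : μ.bind P = μ) :
    tvDist (iterBind ν Phat M) μ ≤
      (1 - α) ^ M * tvDist μ ν + ε * (1 - (1 - α) ^ M) / α := by
  have := hP
  have := hPhat
  have := isProbabilityMeasure_iterBind ν hPhatmeas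
  have hstep (n : ℕ) : tvDist (iterBind ν Phat (n + 1)) μ
      ≤ ε + (1 - α) * tvDist (iterBind ν Phat n) μ :=
    tvDist_bind_le_add_mul hPmeas (hPhatmeas _) hDoeblin (hclose _) _ μ hinv
  have h := le_pow_mul_add_of_le_add_mul (d := fun n => tvDist (iterBind ν Phat n) μ)
    (by linarith) (by linarith) hstep M
  rwa [sub_sub_cancel, iterBind, tvDist_comm ν] at h
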